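/- arXiv:1408.5932 — 2 statements merged into one kernel-verified Lean document; each statement's English description precedes it below -/
import Mathlib

section
/- Let $n,k,r$ be integers with $1 < k < n-1$ and $1 < r \le \lfloor n/k \rfloor$, and suppose $\Delta_{n,k}^{stab(r)}$ is $(n-1)$-dimensional. Then for every $\ell \in [n]$ the flat $H_{\ell,r-1} = \{x \in \mathbb{R}^n : \sum_{i=\ell}^{\ell+r-2} x_i = 1,\ \sum_{i=1}^n x_i = k\}$ (indices modulo $n$) is not facet-defining for $\Delta_{n,k}^{stab(r)}$; that is, the set $\Delta_{n,k}^{stab(r)} \cap H_{\ell,r-1}$ has affine dimension strictly less than $n-2$. -/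
/-!
On `Δ ∩ H_{ℓ,r-1}` the window inequality `∑_{i=ℓ}^{ℓ+r-1} x_i ≤ 1`, valid on all of `Δ`, together
with `x ≥ 0` forces `x_{ℓ+r-1} = 0`. So the face lies in the common level set of three linear
functionals (window sum of length `r - 1`, total sum, coordinate `ℓ + r - 1`), which are linearly
independent as soon as `ℓ, ℓ + r - 1, ℓ + r` are distinct, i.e. `2 ≤ r < n`. Hence the face has
dimension at most `n - 3`.
-/

open Finset

/-- The index `ℓ + i` taken modulo `n`, as an element of `Fin n`. -/
def cycIdx {n : ℕ} (ℓ : Fin n) (i : ℕ) : Fin n :=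
  ⟨(ℓ.val + i) % n, Nat.mod_lt _ ℓ.pos⟩

/-- The cyclic distance between `i` and `j` on the cycle with `n` vertices. -/
def cycDist {n : ℕ} (i j : Fin n) : ℕ :=
  min ((i.val + n - j.val) % n) ((j.val + n - i.val) % n)

/-- `I` is an `r`-stable `k`-subset of `[n]`: it has `k` elements, any two distinct
ones at cyclic distance at least `r`. -/
def IsStable (n k r : ℕ) (I : Finset (Fin n)) : Prop :=
  I.card = k ∧ ∀ i ∈ I, ∀ j ∈ I, i ≠ j → r ≤ cycDist i j

/-- The characteristic vector of `I ⊆ [n]`. -/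
def charVec {n : ℕ} (I : Finset (Fin n)) : Fin n → ℝ :=
  fun i => if i ∈ I then 1 else 0

/-- The `r`-stable `n,k`-hypersimplex: the convex hull of the characteristic vectors
of the `r`-stable `k`-subsets of `[n]`. -/
noncomputable def stabHS (n k r : ℕ) : Set (Fin n → ℝ) :=
  convexHull ℝ (charVec '' {I : Finset (Fin n) | IsStable n k r I})

/-- Sum of the `r` cyclically consecutive coordinates `x ℓ, x (ℓ+1), …, x (ℓ+r-1)`,
indices modulo `n`. -/
def wSum {n : ℕ} (r : ℕ) (ℓ : Fin n) (x : Fin n → ℝ) : ℝ :=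
  ∑ i ∈ Finset.range r, x (cycIdx ℓ i)

lemma cycIdx_injective_of_lt {n : ℕ} (ℓ : Fin n) {i j : ℕ} (hi : i < n) (hj : j < n)
    (h : cycIdx ℓ i = cycIdx ℓ j) : i = j := by
  have h' : (ℓ.val + i) % n = (ℓ.val + j) % n := congrArg Fin.val h
  have h2 : i % n = j % n := Nat.ModEq.add_left_cancel' ℓ.val h'
  rwa [Nat.mod_eq_of_lt hi, Nat.mod_eq_of_lt hj] at h2

lemma cycDist_cycIdx_le {n : ℕ} (ℓ : Fin n) {i j : ℕ} (hij : i ≤ j) (hj : j < n) :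
    cycDist (cycIdx ℓ i) (cycIdx ℓ j) ≤ j - i := by
  set a := (ℓ.val + i) % n
  set b := (ℓ.val + j) % n
  have ha : a < n := Nat.mod_lt _ ℓ.pos
  have hdiff : (b + n - a) % n = (j - i) % n := by
    apply Nat.ModEq.add_right_cancel' (a + i)
    calc b + n - a + (a + i) = n + (b + i) := by omega
      _ ≡ b + i [MOD n] := Nat.add_modEq_left
      _ ≡ ℓ.val + j + i [MOD n] := (Nat.mod_modEq _ n).add_right i
      _ = j + (ℓ.val + i) := by ring
      _ ≡ j + a [MOD n] := ((Nat.mod_modEq _ n).add_left j).symm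
      _ = j - i + (a + i) := by omega
  calc cycDist (cycIdx ℓ i) (cycIdx ℓ j) ≤ (b + n - a) % n := min_le_right _ _
    _ = j - i := by rw [hdiff, Nat.mod_eq_of_lt (by omega)]

lemma wSum_succ {n : ℕ} (s : ℕ) (ℓ : Fin n) (x : Fin n → ℝ) :
    wSum (s + 1) ℓ x = wSum s ℓ x + x (cycIdx ℓ s) :=
  sum_range_succ _ _

lemma isLinearMap_wSum {n : ℕ} (s : ℕ) (ℓ : Fin n) : IsLinearMap ℝ (wSum s ℓ) where
  map_add x y := by simp [wSum, sum_add_distrib]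
  map_smul c x := by simp [wSum, mul_sum]

lemma wSum_single {n s t : ℕ} (ℓ : Fin n) (hs : s ≤ n) (ht : t < n) :
    wSum s ℓ (Pi.single (cycIdx ℓ t) 1) = if t < s then 1 else 0 := by
  have hcoord : ∀ i ∈ range s,
      (Pi.single (cycIdx ℓ t) 1 : Fin n → ℝ) (cycIdx ℓ i) = if t = i then 1 else 0 := by
    intro i hi
    have hin : i < n := (mem_range.1 hi).trans_le hs
    simp only [Pi.single_apply, eq_comm (a := t)]
    exact if_congr ⟨cycIdx_injective_of_lt ℓ hin ht, fun h => h ▸ rfl⟩ rfl rfl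
  rw [wSum, sum_congr rfl hcoord, sum_ite_eq]
  simp only [mem_range]

lemma IsStable.wSum_charVec_le_one {n k r : ℕ} {I : Finset (Fin n)} (hI : IsStable n k r I)
    (ℓ : Fin n) (hrn : r ≤ n) : wSum r ℓ (charVec I) ≤ 1 := by
  have hcount : wSum r ℓ (charVec I) = ((range r).filter (fun i => cycIdx ℓ i ∈ I)).card := by
    simp [wSum, charVec, sum_boole]
  have hle : ((range r).filter (fun i => cycIdx ℓ i ∈ I)).card ≤ 1 := by
    refine card_le_one.2 fun a ha b hb => ?_
    simp only [mem_filter, mem_range] at ha hb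
    by_contra hab
    wlog hlt : a < b generalizing a b
    · exact this b a hb ha (Ne.symm hab) (by omega)
    have hne : cycIdx ℓ a ≠ cycIdx ℓ b := fun h =>
      hab (cycIdx_injective_of_lt ℓ (by omega) (by omega) h)
    have := hI.2 _ ha.2 _ hb.2 hne
    have := cycDist_cycIdx_le ℓ hlt.le (by omega : b < n)
    omega
  rw [hcount]
  exact_mod_cast hle

lemma stabHS_subset_wSum_le_one {n k r : ℕ} (ℓ : Fin n) (hrn : r ≤ n) :
    stabHS n k r ⊆ {x | wSum r ℓ x ≤ 1} :=
  convexHull_min (by rintro _ ⟨I, hI, rfl⟩; exact hI.wSum_charVec_le_one ℓ hrn)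
    (convex_halfSpace_le (isLinearMap_wSum r ℓ) 1)

lemma stabHS_subset_nonneg (n k r : ℕ) : stabHS n k r ⊆ Set.Ici 0 :=
  convexHull_min (by rintro _ ⟨I, -, rfl⟩ i; unfold charVec; split_ifs <;> norm_num)
    (convex_Ici 0)

lemma coord_eq_zero_of_mem_stabHS {n k r : ℕ} (ℓ : Fin n) (hr : 1 ≤ r) (hrn : r ≤ n)
    {x : Fin n → ℝ} (hx : x ∈ stabHS n k r) (hw : wSum (r - 1) ℓ x = 1) :
    x (cycIdx ℓ (r - 1)) = 0 := by
  have hwin : wSum (r - 1 + 1) ℓ x ≤ 1 := by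
    rw [Nat.sub_add_cancel hr]; exact stabHS_subset_wSum_le_one ℓ hrn hx
  have hnonneg : 0 ≤ x (cycIdx ℓ (r - 1)) := stabHS_subset_nonneg n k r hx _
  rw [wSum_succ, hw] at hwin
  linarith

def faceConstraints {n : ℕ} (s : ℕ) (ℓ : Fin n) : (Fin n → ℝ) →ₗ[ℝ] ℝ × ℝ × ℝ where
  toFun x := (wSum s ℓ x, ∑ i, x i, x (cycIdx ℓ s))
  map_add' x y := by simp [(isLinearMap_wSum s ℓ).map_add, sum_add_distrib]
  map_smul' c x := by simp [(isLinearMap_wSum s ℓ).map_smul, mul_sum]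

lemma faceConstraints_single {n s t : ℕ} (ℓ : Fin n) (hs : s < n) (ht : t < n) :
    faceConstraints s ℓ (Pi.single (cycIdx ℓ t) 1) =
      (if t < s then 1 else 0, 1, if s = t then 1 else 0) := by
  simp only [faceConstraints, LinearMap.coe_mk, AddHom.coe_mk, wSum_single ℓ hs.le ht,
    Pi.single_apply, sum_ite_eq', mem_univ, if_true, Prod.mk.injEq, true_and]
  exact if_congr ⟨cycIdx_injective_of_lt ℓ hs ht, fun h => h ▸ rfl⟩ rfl rfl

lemma faceConstraints_surjective {n s : ℕ} (ℓ : Fin n) (hs : 0 < s) (hsn : s + 1 < n) :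
    Function.Surjective (faceConstraints s ℓ) := by
  rintro ⟨a, b, c⟩
  let e : ℕ → Fin n → ℝ := fun t => Pi.single (cycIdx ℓ t) 1
  refine ⟨a • e 0 + c • e s + (b - a - c) • e (s + 1), ?_⟩
  have hs' : s < n := by omega
  simp only [e, map_add, map_smul, faceConstraints_single ℓ hs' (by omega : 0 < n),
    faceConstraints_single ℓ hs' hs', faceConstraints_single ℓ hs' hsn]
  simp [hs, hs.ne']

lemma finrank_ker_faceConstraints {n s : ℕ} (ℓ : Fin n) (hs : 0 < s) (hsn : s + 1 < n) :
    Module.finrank ℝ (LinearMap.ker (faceConstraints s ℓ)) = n - 3 := by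
  have h := LinearMap.finrank_range_add_finrank_ker (faceConstraints s ℓ)
  rw [LinearMap.range_eq_top.2 (faceConstraints_surjective ℓ hs hsn), finrank_top] at h
  simp only [Module.finrank_prod, Module.finrank_self, Module.finrank_fintype_fun_eq_card,
    Fintype.card_fin] at h
  omega

lemma vectorSpan_le_ker_of_forall_eq {K V W : Type*} [Ring K] [AddCommGroup V] [Module K V]
    [AddCommGroup W] [Module K W] (f : V →ₗ[K] W) {s : Set V} (c : W)
    (h : ∀ x ∈ s, f x = c) : vectorSpan K s ≤ LinearMap.ker f := by
  rw [vectorSpan_def, Submodule.span_le]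
  rintro _ ⟨x, hx, y, hy, rfl⟩
  simp [h x hx, h y hy]

theorem stmt4_general (n k r : ℕ) (hk : 1 < k) (hr1 : 1 < r) (hr2 : r ≤ n / k)
    (ℓ : Fin n) :
    Module.finrank ℝ (affineSpan ℝ (stabHS n k r ∩
      {x | wSum (r - 1) ℓ x = 1 ∧ (∑ i, x i) = (k : ℝ)})).direction < n - 2 := by
  have hrn : 2 * r ≤ n := by
    have := (Nat.le_div_iff_mul_le (by omega)).1 hr2
    have := Nat.mul_le_mul_left r hk
    omega
  have hconst : ∀ x ∈ stabHS n k r ∩ {x | wSum (r - 1) ℓ x = 1 ∧ (∑ i, x i) = (k : ℝ)},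
      faceConstraints (r - 1) ℓ x = (1, (k : ℝ), 0) := by
    rintro x ⟨hx, hw, hsum⟩
    simp [faceConstraints, hw, hsum, coord_eq_zero_of_mem_stabHS ℓ hr1.le (by omega) hx hw]
  calc Module.finrank ℝ (affineSpan ℝ _).direction
      ≤ Module.finrank ℝ (LinearMap.ker (faceConstraints (r - 1) ℓ)) := by
        rw [direction_affineSpan]
        exact Submodule.finrank_mono (vectorSpan_le_ker_of_forall_eq _ _ hconst)
    _ = n - 3 := finrank_ker_faceConstraints ℓ (by omega) (by omega)
    _ < n - 2 := by omega

/-- for `1 < k < n-1`, `1 < r ≤ ⌊n/k⌋`, if the `r`-stable hypersimplex is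
`(n-1)`-dimensional then for every `ℓ` the flat `H_{ℓ,r-1}` (window of length `r-1` summing
to `1`, inside the hyperplane of coordinate sum `k`) is not facet-defining: the
intersection has affine dimension strictly less than `n - 2`. -/
theorem stmt4 (n k r : ℕ) (hk : 1 < k) (hkn : k < n - 1) (hr1 : 1 < r) (hr2 : r ≤ n / k)
    (hdim : Module.finrank ℝ (affineSpan ℝ (stabHS n k r)).direction = n - 1)
    (ℓ : Fin n) :
    Module.finrank ℝ (affineSpan ℝ (stabHS n k r ∩
      {x | wSum (r - 1) ℓ x = 1 ∧ (∑ i, x i) = (k : ℝ)})).direction < n - 2 :=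
  stmt4_general n k r hk hr1 hr2 ℓ
end

section
/- Let $n,k$ be integers with $1 < k < n-1$, let $q = \lceil n/k \rceil$, and suppose $\alpha := kq - n$ satisfies $2 \le \alpha \le k-1$. Then for every integer $1 \le r < \lfloor n/k \rfloor$, the relative interior of the dilate $q \cdot \Delta_{n,k}^{stab(r)}$ contains at least two distinct points of $\mathbb{Z}^n$. (Consequently $\Delta_{n,k}^{stab(r)}$ is not Gorenstein.) -/
open Finset
open scoped Pointwise

/-!
Write `n = α d + (k - α)(d + 1)` with `d = q - 1` and cut the cycle `ℤ/n` into `α` short blocks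
of length `d` followed by `k - α` long blocks of length `d + 1`. Taking the `j`-th position of every
block (`j = 0, …, d`; in a short block one position is taken twice) gives `d + 1` subsets of size
`k` whose consecutive elements are at distance at least `d - 1 ≥ r`, so they are `r`-stable; their
characteristic vectors add up to `y_c = 𝟙 + ∑_{m < α} e_{c + m d}`, hence `y_c ∈ q • Δ`.
For every `i`, two consecutive sets of such a decomposition (possibly after moving the doubled
position of the short blocks) pick `i` and `i + 1` in the same block; exchanging these two
elements shows `y_c ± (e_{i+1} - e_i) ∈ q • Δ`. The steps `e_{i+1} - e_i` span the hyperplane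
`∑ x = q k` containing `q • Δ`, so `y_c` lies in its relative interior, and `y_0 ≠ y_1`.
-/

open Fin.NatCast

theorem sum_mem_smul_convexHull {E ι : Type*} [AddCommGroup E] [Module ℝ E] {s : Set E}
    {t : Finset ι} (ht : t.Nonempty) {v : ι → E} (hv : ∀ i ∈ t, v i ∈ s) :
    ∑ i ∈ t, v i ∈ (#t : ℝ) • convexHull ℝ s := by
  have hcard : (0 : ℝ) < #t := by exact_mod_cast ht.card_pos
  refine ⟨t.centerMass (fun _ => 1) v,
    t.centerMass_mem_convexHull (fun _ _ => zero_le_one) (by simpa using hcard) hv, ?_⟩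
  simp [Finset.centerMass, smul_smul, hcard.ne']

theorem Convex.add_sum_smul_mem {E ι : Type*} [AddCommGroup E] [Module ℝ E] {C : Set E}
    (hC : Convex ℝ C) {y : E} (hy : y ∈ C) {s : Finset ι} {v : ι → E}
    (hv : ∀ i ∈ s, y + v i ∈ C ∧ y - v i ∈ C) {a : ι → ℝ} (ha : ∑ i ∈ s, |a i| ≤ 1) :
    y + ∑ i ∈ s, a i • v i ∈ C := by
  classical
  let z : Option ι → E := fun o => o.elim y fun i => if 0 ≤ a i then y + v i else y - v i
  let w : Option ι → ℝ := fun o => o.elim (1 - ∑ i ∈ s, |a i|) fun i => |a i|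
  have hz : ∀ i, |a i| • z (some i) = |a i| • y + a i • v i := by
    intro i
    by_cases hai : 0 ≤ a i
    · simp [z, hai, abs_of_nonneg hai, smul_add]
    · simp [z, hai, abs_of_neg (not_le.mp hai), smul_sub]
  have hmem := hC.sum_mem (t := insertNone s) (w := w) (z := z)
    (by
      rintro (_ | i) _
      · simpa [w] using ha
      · exact abs_nonneg _)
    (by simp [w, sum_insertNone])
    (by
      rintro (_ | i) hi
      · exact hy
      · have := hv i (by simpa using hi)
        by_cases hai : 0 ≤ a i <;> simp [z, hai, this])
  have hsum : ∑ i ∈ s, |a i| • z (some i) = (∑ i ∈ s, |a i|) • y + ∑ i ∈ s, a i • v i := by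
    simp_rw [hz, sum_add_distrib, sum_smul]
  rw [sum_insertNone] at hmem
  convert hmem using 1
  change _ = (1 - ∑ i ∈ s, |a i|) • y + ∑ i ∈ s, |a i| • z (some i)
  rw [hsum, sub_smul, one_smul]
  abel

theorem sum_eq_sum_sub_add_of_forall_ne {ι M : Type*} [DecidableEq ι] [AddCommGroup M]
    {s : Finset ι} {i : ι} (hi : i ∈ s) {f g : ι → M} (h : ∀ x ∈ s, x ≠ i → g x = f x) :
    ∑ x ∈ s, g x = ∑ x ∈ s, f x - f i + g i := by
  rw [← add_sum_erase s g hi, ← add_sum_erase s f hi,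
    sum_congr rfl fun x hx => h x (mem_of_mem_erase hx) (ne_of_mem_erase hx)]
  abel

theorem sum_range_succ_comp_ite_pred {M : Type*} [AddCommMonoid M] {s d : ℕ} (hs : s < d)
    (g : ℕ → M) :
    ∑ j ∈ range (d + 1), g (if s < j then j - 1 else j) = ∑ o ∈ range d, g o + g s := by
  obtain ⟨e, rfl⟩ := Nat.exists_eq_add_of_lt hs
  have hsplit : s + e + 1 + 1 = (s + 1) + (e + 1) := by omega
  rw [hsplit, sum_range_add _ (s + 1) (e + 1), show s + e + 1 = s + (e + 1) by omega,
    sum_range_add g s (e + 1)]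
  have hlow : ∑ j ∈ range (s + 1), g (if s < j then j - 1 else j) = ∑ j ∈ range (s + 1), g j :=
    sum_congr rfl fun j hj => by rw [if_neg (by simp at hj; omega)]
  have hhigh : ∑ i ∈ range (e + 1), g (if s < s + 1 + i then s + 1 + i - 1 else s + 1 + i)
      = ∑ i ∈ range (e + 1), g (s + i) :=
    sum_congr rfl fun i _ => by rw [if_pos (by omega)]; congr 1; omega
  rw [hlow, hhigh, sum_range_succ]
  abel

theorem sum_blocks_eq_sum_range {M : Type*} [AddCommMonoid M] {B L : ℕ → ℕ} (h0 : B 0 = 0)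
    (hB : ∀ m, B (m + 1) = B m + L m) (g : ℕ → M) (K : ℕ) :
    ∑ m ∈ range K, ∑ o ∈ range (L m), g (B m + o) = ∑ t ∈ range (B K), g t := by
  induction K with
  | zero => simp [h0]
  | succ K ih => rw [sum_range_succ, ih, hB, sum_range_add]

theorem update_const_le_add_one {v w : ℕ} (hvw : v ≤ w + 1) (hwv : w ≤ v + 1) (m₀ m m' : ℕ) :
    Function.update (fun _ => v) m₀ w m ≤ Function.update (fun _ => v) m₀ w m' + 1 := by
  simp only [Function.update_apply]
  split_ifs <;> omega

theorem exists_le_lt_succ {f : ℕ → ℕ} {t K : ℕ} (h0 : f 0 ≤ t) (hK : t < f K) :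
    ∃ m < K, f m ≤ t ∧ t < f (m + 1) := by
  induction K with
  | zero => omega
  | succ K ih =>
    by_cases hfK : f K ≤ t
    · exact ⟨K, K.lt_succ_self, hfK, hK⟩
    · obtain ⟨m, hm, hfm⟩ := ih (not_le.mp hfK)
      exact ⟨m, hm.trans K.lt_succ_self, hfm⟩

section CyclicSteps

variable {n : ℕ}

theorem cycIdx_natCast [NeZero n] (x i : ℕ) :
    cycIdx (x : Fin n) i = ((x + i : ℕ) : Fin n) :=
  Fin.ext (by simp only [cycIdx, Fin.val_natCast, Nat.mod_add_mod])

def cycStep (i : Fin n) : Fin n → ℝ :=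
  Pi.single (cycIdx i 1) 1 - Pi.single i 1

theorem cycStep_natCast [NeZero n] (x : ℕ) :
    cycStep (x : Fin n) = Pi.single ((x + 1 : ℕ) : Fin n) 1 - Pi.single (x : Fin n) 1 := by
  rw [cycStep, cycIdx_natCast]

theorem sum_sigma_cycStep [NeZero n] {u : Fin n → ℝ} (hu : ∑ v, u v = 0) :
    ∑ p ∈ univ.sigma fun v : Fin n => range v, u p.1 • cycStep (p.2 : Fin n) = u := by
  have htel : ∀ v : Fin n, ∑ l ∈ range v, cycStep (l : Fin n) = Pi.single v 1 - Pi.single 0 1 := by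
    intro v
    simp_rw [cycStep_natCast]
    exact (sum_range_sub (fun l : ℕ => (Pi.single (l : Fin n) 1 : Fin n → ℝ)) v).trans (by simp)
  simp_rw [sum_sigma, ← smul_sum, htel, smul_sub, sum_sub_distrib, ← sum_smul, hu, zero_smul,
    sub_zero]
  refine (sum_congr rfl fun v _ => ?_).trans (univ_sum_single u)
  rw [← Pi.single_smul', smul_eq_mul, mul_one]

theorem sum_eq_of_mem_affineSpan {C : Set (Fin n → ℝ)} {t : ℝ}
    (hC : ∀ x ∈ C, ∑ i, x i = t) {x : Fin n → ℝ} (hx : x ∈ affineSpan ℝ C) : ∑ i, x i = t := by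
  refine affineSpan_induction hx hC fun c u v w hu hv hw => ?_
  simp only [vsub_eq_sub, vadd_eq_add, Pi.add_apply, Pi.smul_apply, Pi.sub_apply, smul_eq_mul,
    sum_add_distrib, ← mul_sum, sum_sub_distrib, hu, hv, hw, sub_self, mul_zero, zero_add]

theorem mem_intrinsicInterior_of_add_sub_cycStep_mem [NeZero n] {C : Set (Fin n → ℝ)}
    (hC : Convex ℝ C) {t : ℝ} (hCt : ∀ x ∈ C, ∑ i, x i = t) {y : Fin n → ℝ} (hy : y ∈ C)
    (hstep : ∀ i, y + cycStep i ∈ C ∧ y - cycStep i ∈ C) : y ∈ intrinsicInterior ℝ C := by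
  have hn : (0 : ℝ) < n := by exact_mod_cast Nat.pos_of_neZero n
  rw [mem_intrinsicInterior]
  refine ⟨⟨y, subset_affineSpan ℝ C hy⟩, ?_, rfl⟩
  rw [mem_interior_iff_mem_nhds, Metric.mem_nhds_iff]
  -- `u = ∑ᵥ uᵥ (eᵥ - e₀)` and `eᵥ - e₀` is a sum of `v < n` steps, so `‖u‖ < 1 / n²` keeps
  -- the total weight of the steps at most `1`.
  refine ⟨1 / n ^ 2, by positivity, fun x hx => ?_⟩
  rw [Metric.mem_ball, Subtype.dist_eq, dist_eq_norm] at hx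
  set u : Fin n → ℝ := x - y
  have hu : ∑ v, u v = 0 := by
    simp only [u, Pi.sub_apply, sum_sub_distrib, sum_eq_of_mem_affineSpan hCt x.2, hCt y hy,
      sub_self]
  have hcoef : ∑ p ∈ univ.sigma fun v : Fin n => range v, |u p.1| ≤ 1 := by
    calc ∑ p ∈ univ.sigma fun v : Fin n => range v, |u p.1|
        = ∑ v : Fin n, ((v : ℕ) : ℝ) * |u v| := by simp [sum_sigma]
      _ ≤ ∑ _v : Fin n, (n : ℝ) * ‖u‖ := by
        gcongr with v
        · exact_mod_cast v.isLt.le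
        · exact norm_le_pi_norm u v
      _ ≤ 1 := by
        rw [sum_const, card_univ, Fintype.card_fin, nsmul_eq_mul, ← mul_assoc, ← sq]
        rw [lt_div_iff₀ (by positivity)] at hx
        linarith [mul_comm ‖u‖ ((n : ℝ) ^ 2)]
  have hx' := hC.add_sum_smul_mem hy (fun p _ => hstep (p.2 : Fin n)) hcoef
  rwa [sum_sigma_cycStep hu, add_sub_cancel] at hx'

theorem sum_range_single_natCast_add [NeZero n] (b : ℕ) :
    ∑ t ∈ range n, (Pi.single ((b + t : ℕ) : Fin n) 1 : Fin n → ℝ) = 1 := by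
  rw [← Fin.sum_univ_eq_sum_range (fun t => (Pi.single ((b + t : ℕ) : Fin n) 1 : Fin n → ℝ))]
  simp only [Nat.cast_add, Fin.cast_val_eq_self]
  exact (Equiv.sum_comp (Equiv.addLeft (b : Fin n)) fun t => (Pi.single t 1 : Fin n → ℝ)).trans
    (univ_sum_single fun _ => 1)

end CyclicSteps

def cycImage (n k : ℕ) [NeZero n] (p : ℕ → ℕ) : Finset (Fin n) :=
  (range k).image fun m => (p m : Fin n)

section CyclicImage

variable {n k r : ℕ} {p : ℕ → ℕ}

theorem cycDist_comm (x y : Fin n) : cycDist x y = cycDist y x :=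
  min_comm _ _

theorem cycDist_eq_min_sub (x y : Fin n) : cycDist x y = min (x - y).val (y - x).val := by
  have hx := x.isLt
  have hy := y.isLt
  rw [cycDist, Fin.val_sub, Fin.val_sub, Nat.add_sub_assoc hy.le, Nat.add_sub_assoc hx.le,
    add_comm x.val, add_comm y.val]

theorem cycDist_self (x : Fin n) : cycDist x x = 0 := by
  simp [cycDist]

theorem le_cycDist_natCast {a b : ℕ} [NeZero n] (hr : 0 < r) (hab : a + r ≤ b)
    (hba : b + r ≤ a + n) : r ≤ cycDist (a : Fin n) (b : Fin n) := by
  have hsub : (b : Fin n) - a = ((b - a : ℕ) : Fin n) := by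
    rw [sub_eq_iff_eq_add, ← Nat.cast_add, Nat.sub_add_cancel (by omega)]
  have hval : ((b : Fin n) - a).val = b - a := by
    rw [hsub, Fin.val_natCast, Nat.mod_eq_of_lt (by omega)]
  rw [cycDist_eq_min_sub, ← neg_sub, Fin.val_neg', hval, Nat.mod_eq_of_lt (by omega)]
  omega

theorem charVec_eq_sum_single (I : Finset (Fin n)) :
    charVec I = ∑ x ∈ I, Pi.single x 1 := by
  ext v
  simp [charVec, Finset.sum_apply, Pi.single_apply]

theorem add_le_of_gaps (hstep : ∀ m, m + 1 < k → p m + r ≤ p (m + 1)) {u v : ℕ} (huv : u < v)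
    (hv : v < k) : p u + r ≤ p v := by
  induction v with
  | zero => omega
  | succ w ih =>
    have hw := hstep w hv
    rcases Nat.lt_succ_iff_lt_or_eq.mp huv with h | rfl
    · have := ih h (by omega)
      omega
    · exact hw

theorem le_cycDist_of_gaps [NeZero n] (hr : 0 < r)
    (hstep : ∀ m, m + 1 < k → p m + r ≤ p (m + 1)) (hwrap : p (k - 1) + r ≤ p 0 + n)
    {u v : ℕ} (huv : u < v) (hv : v < k) : r ≤ cycDist (p u : Fin n) (p v : Fin n) := by
  have h0 : p 0 ≤ p u := by
    rcases Nat.eq_zero_or_pos u with rfl | hu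
    · rfl
    · exact le_of_add_le_left (add_le_of_gaps hstep hu (by omega))
  have hlast : p v ≤ p (k - 1) := by
    rcases (show v = k - 1 ∨ v < k - 1 by omega) with h | h
    · rw [h]
    · exact le_of_add_le_left (add_le_of_gaps hstep h (by omega))
  exact le_cycDist_natCast hr (add_le_of_gaps hstep huv hv) (by omega)

theorem isStable_cycImage [NeZero n] (hr : 0 < r)
    (hstep : ∀ m, m + 1 < k → p m + r ≤ p (m + 1)) (hwrap : p (k - 1) + r ≤ p 0 + n) :
    Set.InjOn (fun m => (p m : Fin n)) (range k) ∧ IsStable n k r (cycImage n k p) := by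
  have hdist : ∀ u ∈ range k, ∀ v ∈ range k, u ≠ v → r ≤ cycDist (p u : Fin n) (p v : Fin n) := by
    intro u hu v hv huv
    rw [mem_range] at hu hv
    rcases Nat.lt_or_gt_of_ne huv with h | h
    · exact le_cycDist_of_gaps hr hstep hwrap h hv
    · rw [cycDist_comm]
      exact le_cycDist_of_gaps hr hstep hwrap h hu
  have hinj : Set.InjOn (fun m => (p m : Fin n)) (range k) := by
    intro u hu v hv huv
    by_contra hne
    have := hdist u hu v hv hne
    simp only at huv
    rw [huv, cycDist_self] at this
    omega
  refine ⟨hinj, by rw [cycImage, card_image_of_injOn hinj, card_range], ?_⟩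
  simp only [cycImage, mem_image]
  rintro _ ⟨u, hu, rfl⟩ _ ⟨v, hv, rfl⟩ hne
  exact hdist u hu v hv fun h => hne (h ▸ rfl)

theorem charVec_cycImage [NeZero n]
    (hp : Set.InjOn (fun m => (p m : Fin n)) (range k)) :
    charVec (cycImage n k p) = ∑ m ∈ range k, Pi.single (p m : Fin n) 1 := by
  rw [charVec_eq_sum_single, cycImage, sum_image hp]

end CyclicImage

section StableHypersimplex

variable {n k r : ℕ}

theorem sum_eq_of_mem_stabHS {x : Fin n → ℝ} (hx : x ∈ stabHS n k r) : ∑ i, x i = k := by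
  have hlin : IsLinearMap ℝ fun x : Fin n → ℝ => ∑ i, x i :=
    ⟨fun x y => sum_add_distrib, fun c x => (mul_sum _ _ _).symm⟩
  refine convexHull_min ?_ (convex_hyperplane hlin (k : ℝ)) hx
  rintro _ ⟨I, hI, rfl⟩
  simp [charVec, ← hI.1]

theorem sum_eq_of_mem_smul_stabHS {N : ℕ} {x : Fin n → ℝ} (hx : x ∈ (N : ℝ) • stabHS n k r) :
    ∑ i, x i = N * k := by
  obtain ⟨w, hw, rfl⟩ := hx
  simp [← mul_sum, sum_eq_of_mem_stabHS hw]

theorem sum_charVec_mem_smul_stabHS {N : ℕ} (hN : 0 < N) {F : ℕ → Finset (Fin n)}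
    (hF : ∀ t < N, IsStable n k r (F t)) :
    ∑ t ∈ range N, charVec (F t) ∈ (N : ℝ) • stabHS n k r := by
  have hmem := sum_mem_smul_convexHull (s := charVec '' {I | IsStable n k r I})
    (nonempty_range_iff.mpr hN.ne') fun t ht => ⟨F t, hF t (mem_range.mp ht), rfl⟩
  rwa [card_range] at hmem

theorem sum_charVec_sub_add_mem_smul_stabHS {N : ℕ} {F : ℕ → Finset (Fin n)}
    (hF : ∀ t < N, IsStable n k r (F t)) {j : ℕ} (hj : j < N) {X : Finset (Fin n)}
    (hX : IsStable n k r X) :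
    ∑ t ∈ range N, charVec (F t) - charVec (F j) + charVec X ∈ (N : ℝ) • stabHS n k r := by
  classical
  have hsum := sum_eq_sum_sub_add_of_forall_ne (mem_range.mpr hj)
    (f := fun t => charVec (F t)) (g := fun t => charVec (Function.update F j X t))
    fun t _ ht => by rw [Function.update_of_ne ht]
  simp only [Function.update_self] at hsum
  rw [← hsum]
  refine sum_charVec_mem_smul_stabHS (by omega) fun t ht => ?_
  rcases eq_or_ne t j with rfl | htj
  · rwa [Function.update_self]
  · rw [Function.update_of_ne htj]
    exact hF t ht

end StableHypersimplex

section Blocks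

variable (d α : ℕ)

-- `α` short blocks of length `d`, then long blocks of length `d + 1`; the truncated `m - α`
-- counts the long blocks before block `m`.
def blockStart (m : ℕ) : ℕ := m * d + (m - α)

-- In a short block the indices `j = s` and `j = s + 1` both give offset `s`.
def blockOffset (s j m : ℕ) : ℕ := if m < α ∧ s < j then j - 1 else j

def blockPos (b s : ℕ) (σ : ℕ → ℕ) (m : ℕ) : ℕ := b + blockStart d α m + blockOffset α s (σ m) m

variable {d α} {n k r : ℕ}

theorem blockStart_zero : blockStart d α 0 = 0 := by simp [blockStart]

theorem blockStart_succ (m : ℕ) :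
    blockStart d α (m + 1) = blockStart d α m + if m < α then d else d + 1 := by
  simp only [blockStart, add_mul, one_mul]
  split_ifs <;> omega

theorem blockStart_of_le {m : ℕ} (hm : m ≤ α) : blockStart d α m = m * d := by
  simp [blockStart, Nat.sub_eq_zero_of_le hm]

theorem blockStart_eq_of_add_eq (hn : n + α = k * (d + 1)) (hαk : α ≤ k) :
    blockStart d α k = n := by
  simp only [blockStart, mul_add, mul_one] at hn ⊢
  omega

theorem blockPos_add_le_succ {b s : ℕ} {σ : ℕ → ℕ} (hrd : r < d) (m : ℕ)
    (hσ : σ m ≤ σ (m + 1) + 1) : blockPos d α b s σ m + r ≤ blockPos d α b s σ (m + 1) := by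
  have := blockStart_succ (d := d) (α := α) m
  simp only [blockPos, blockOffset] at hσ ⊢
  split_ifs at * <;> omega

theorem blockPos_last_add_le {b s : ℕ} {σ : ℕ → ℕ} (hn : n + α = k * (d + 1)) (hαk : α < k)
    (hrd : r < d) (hσ : σ (k - 1) ≤ σ 0 + 1) :
    blockPos d α b s σ (k - 1) + r ≤ blockPos d α b s σ 0 + n := by
  have hlast := blockStart_succ (d := d) (α := α) (k - 1)
  rw [Nat.sub_add_cancel (by omega), blockStart_eq_of_add_eq hn hαk.le, if_neg (by omega)] at hlast
  simp only [blockPos, blockOffset, blockStart_zero] at hσ ⊢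
  split_ifs <;> omega

theorem sum_sum_single_blockPos_const [NeZero n] (hn : n + α = k * (d + 1))
    (hαk : α ≤ k) {s : ℕ} (hs : s < d) (b : ℕ) :
    ∑ j ∈ range (d + 1), ∑ m ∈ range k,
        (Pi.single (blockPos d α b s (fun _ => j) m : Fin n) 1 : Fin n → ℝ)
      = 1 + ∑ m ∈ range α, Pi.single ((b + s + m * d : ℕ) : Fin n) 1 := by
  set e : ℕ → Fin n → ℝ := fun x => Pi.single (x : Fin n) 1
  set L : ℕ → ℕ := fun m => if m < α then d else d + 1
  have hblock : ∀ m, ∑ j ∈ range (d + 1), e (blockPos d α b s (fun _ => j) m)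
      = ∑ o ∈ range (L m), e (b + (blockStart d α m + o))
        + if m < α then e (b + s + m * d) else 0 := by
    intro m
    by_cases hm : m < α
    · simp only [blockPos, blockOffset, hm, true_and, L, if_true]
      rw [sum_range_succ_comp_ite_pred hs fun o => e (b + blockStart d α m + o),
        blockStart_of_le hm.le]
      simp only [add_assoc, add_comm s]
    · simp [blockPos, blockOffset, hm, L, add_assoc]
  rw [sum_comm, sum_congr rfl fun m _ => hblock m, sum_add_distrib,
    sum_blocks_eq_sum_range (L := L) blockStart_zero blockStart_succ fun t => e (b + t),
    blockStart_eq_of_add_eq hn hαk,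
    sum_range_single_natCast_add, ← sum_filter]
  congr 2
  ext m
  simp only [mem_filter, mem_range]
  omega

theorem exists_blockOffset_step (hn : n + α = k * (d + 1)) (hαk : α < k)
    (hd : 0 < d) {t : ℕ} (ht : t < n) :
    ∃ s ≤ 1, ∃ j < d, ∃ m < k, blockOffset α s (j + 1) m = blockOffset α s j m + 1 ∧
      (blockStart d α m + blockOffset α s j m + (n - s)) % n = t := by
  have hBk := blockStart_eq_of_add_eq hn hαk.le
  obtain ⟨m, hmk, hlo, hhi⟩ := exists_le_lt_succ (f := blockStart d α) (K := k)
    (by simp [blockStart_zero]) (hBk ▸ ht)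
  have hsucc := blockStart_succ (d := d) (α := α) m
  have hwrap : (t + n) % n = t := by rw [Nat.add_mod_right, Nat.mod_eq_of_lt ht]
  -- The last position of a block is followed by the first one of the next block (cyclically):
  -- take `s = 1, j = 0` there. Every other position is handled with `s = 0`.
  by_cases hlast : t + 1 = blockStart d α (m + 1)
  · by_cases hm1 : m + 1 < k
    · refine ⟨1, le_rfl, 0, hd, m + 1, hm1, by simp [blockOffset], ?_⟩
      simp only [blockOffset, Nat.not_lt_zero, and_false, if_false, add_zero]
      rw [← hwrap]
      congr 1
      omega
    · refine ⟨1, le_rfl, 0, hd, 0, by omega, by simp [blockOffset], ?_⟩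
      rw [show m + 1 = k by omega, hBk] at hlast
      simp only [blockOffset, blockStart_zero, Nat.not_lt_zero, and_false, if_false]
      rw [Nat.mod_eq_of_lt (by omega)]
      omega
  · by_cases hm : m < α
    · refine ⟨0, zero_le_one, t - blockStart d α m + 1, ?_, m, hmk, ?_, ?_⟩
      · rw [if_pos hm] at hsucc
        omega
      · simp only [blockOffset, hm, true_and]
        rw [if_pos (by omega), if_pos (by omega)]
        omega
      · simp only [blockOffset, hm, true_and]
        rw [if_pos (by omega), ← hwrap]
        congr 1
        omega
    · refine ⟨0, zero_le_one, t - blockStart d α m, ?_, m, hmk, ?_, ?_⟩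
      · rw [if_neg hm] at hsucc
        omega
      · simp [blockOffset, hm]
      · simp only [blockOffset, hm, false_and, if_false]
        rw [← hwrap]
        congr 1
        omega

end Blocks

def interiorPoint (n d α c : ℕ) [NeZero n] : Fin n → ℝ :=
  1 + ∑ m ∈ range α, Pi.single ((c + m * d : ℕ) : Fin n) 1

section Construction

variable {n k d α r : ℕ} [NeZero n]

theorem isStable_cycImage_blockPos (hn : n + α = k * (d + 1)) (hαk : α < k) (hr : 0 < r)
    (hrd : r < d) (b s : ℕ) {σ : ℕ → ℕ} (hσ : ∀ m m', σ m ≤ σ m' + 1) :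
    IsStable n k r (cycImage n k (blockPos d α b s σ)) ∧
      charVec (cycImage n k (blockPos d α b s σ))
        = ∑ m ∈ range k, Pi.single (blockPos d α b s σ m : Fin n) 1 := by
  obtain ⟨hinj, hstable⟩ := isStable_cycImage hr
    (fun m _ => blockPos_add_le_succ hrd m (hσ _ _)) (blockPos_last_add_le hn hαk hrd (hσ _ _))
  exact ⟨hstable, charVec_cycImage hinj⟩

-- The base `c + (n - s)` puts the doubled offset `s` of short block `m` at `c + m d`.
theorem sum_charVec_cycImage_blockPos_const (hn : n + α = k * (d + 1)) (hαk : α < k)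
    (hr : 0 < r) (hrd : r < d) (c : ℕ) {s : ℕ} (hs : s ≤ 1) :
    ∑ j ∈ range (d + 1), charVec (cycImage n k (blockPos d α (c + (n - s)) s fun _ => j))
      = interiorPoint n d α c := by
  have hn0 := Nat.pos_of_neZero n
  rw [sum_congr rfl fun j _ =>
      (isStable_cycImage_blockPos hn hαk hr hrd _ s (σ := fun _ => j) fun _ _ => j.le_succ).2,
    sum_sum_single_blockPos_const hn hαk.le (by omega), interiorPoint]
  refine congrArg _ (sum_congr rfl fun m _ => ?_)
  rw [show c + (n - s) + s + m * d = c + m * d + n by omega, Nat.cast_add (R := Fin n) _ n,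
    Fin.natCast_self, add_zero]

theorem exists_blockPos_step (hn : n + α = k * (d + 1)) (hαk : α < k) (hd : 0 < d) (c : ℕ)
    (i : Fin n) : ∃ s ≤ 1, ∃ j < d, ∃ m < k,
      (blockPos d α (c + (n - s)) s (fun _ => j) m : Fin n) = i ∧
      blockPos d α (c + (n - s)) s (fun _ => j + 1) m
        = blockPos d α (c + (n - s)) s (fun _ => j) m + 1 := by
  obtain ⟨s, hs, j, hj, m, hm, hstep, hmod⟩ :=
    exists_blockOffset_step hn hαk hd (i - (c : Fin n)).isLt
  refine ⟨s, hs, j, hj, m, hm, ?_, by simp only [blockPos, hstep]; omega⟩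
  have hcast : ((blockStart d α m + blockOffset α s j m + (n - s) : ℕ) : Fin n) = i - c :=
    Fin.ext (by rw [Fin.val_natCast, hmod])
  rw [show blockPos d α (c + (n - s)) s (fun _ => j) m
      = c + (blockStart d α m + blockOffset α s j m + (n - s)) by simp only [blockPos]; omega,
    Nat.cast_add, hcast, add_sub_cancel]

theorem charVec_cycImage_blockPos_update (hn : n + α = k * (d + 1)) (hαk : α < k) (hr : 0 < r)
    (hrd : r < d) (b s : ℕ) {v w m₀ : ℕ} (hm₀ : m₀ < k) (hvw : v ≤ w + 1) (hwv : w ≤ v + 1) :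
    charVec (cycImage n k (blockPos d α b s (Function.update (fun _ => v) m₀ w)))
      = charVec (cycImage n k (blockPos d α b s fun _ => v))
        - Pi.single (blockPos d α b s (fun _ => v) m₀ : Fin n) 1
        + Pi.single (blockPos d α b s (fun _ => w) m₀ : Fin n) 1 := by
  rw [(isStable_cycImage_blockPos (r := r) hn hαk hr hrd b s
      (update_const_le_add_one hvw hwv m₀)).2,
    (isStable_cycImage_blockPos (r := r) hn hαk hr hrd b s fun _ _ => v.le_succ).2,
    sum_eq_sum_sub_add_of_forall_ne (mem_range.mpr hm₀)
      (f := fun m => Pi.single (blockPos d α b s (fun _ => v) m : Fin n) 1) fun m _ hm => by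
      simp only [blockPos, Function.update_of_ne hm]]
  simp only [blockPos, Function.update_self]

theorem sum_charVec_add_single_sub_single_blockPos_mem (hn : n + α = k * (d + 1)) (hαk : α < k)
    (hr : 0 < r) (hrd : r < d) (b s : ℕ) {v w m₀ : ℕ} (hv : v ≤ d) (hm₀ : m₀ < k)
    (hvw : v ≤ w + 1) (hwv : w ≤ v + 1) :
    ∑ t ∈ range (d + 1), charVec (cycImage n k (blockPos d α b s fun _ => t))
        + (Pi.single (blockPos d α b s (fun _ => w) m₀ : Fin n) 1
          - Pi.single (blockPos d α b s (fun _ => v) m₀ : Fin n) 1)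
      ∈ ((d + 1 : ℕ) : ℝ) • stabHS n k r := by
  have hX := sum_charVec_sub_add_mem_smul_stabHS
    (fun t _ => (isStable_cycImage_blockPos hn hαk hr hrd b s fun _ _ => t.le_succ).1)
    (Nat.lt_succ_of_le hv)
    (isStable_cycImage_blockPos hn hαk hr hrd b s (update_const_le_add_one hvw hwv m₀)).1
  rw [charVec_cycImage_blockPos_update hn hαk hr hrd b s hm₀ hvw hwv] at hX
  convert hX using 1
  abel

theorem interiorPoint_add_sub_cycStep_mem (hn : n + α = k * (d + 1)) (hαk : α < k) (hr : 0 < r)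
    (hrd : r < d) (c : ℕ) (i : Fin n) :
    interiorPoint n d α c + cycStep i ∈ ((d + 1 : ℕ) : ℝ) • stabHS n k r ∧
      interiorPoint n d α c - cycStep i ∈ ((d + 1 : ℕ) : ℝ) • stabHS n k r := by
  obtain ⟨s, hs, j, hj, m₀, hm₀, hpos, hnext⟩ := exists_blockPos_step hn hαk (by omega) c i
  rw [← sum_charVec_cycImage_blockPos_const hn hαk hr hrd c hs, ← hpos, cycStep_natCast, ← hnext,
    sub_eq_add_neg _ (_ - _), neg_sub]
  exact ⟨sum_charVec_add_single_sub_single_blockPos_mem hn hαk hr hrd _ s hj.le hm₀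
      (by omega) (by omega),
    sum_charVec_add_single_sub_single_blockPos_mem hn hαk hr hrd _ s hj hm₀
      (by omega) (by omega)⟩

theorem interiorPoint_mem_intrinsicInterior (hn : n + α = k * (d + 1)) (hαk : α < k)
    (hr : 0 < r) (hrd : r < d) (c : ℕ) :
    interiorPoint n d α c ∈ intrinsicInterior ℝ (((d + 1 : ℕ) : ℝ) • stabHS n k r) := by
  refine mem_intrinsicInterior_of_add_sub_cycStep_mem ((convex_convexHull ℝ _).smul _)
    (fun x hx => sum_eq_of_mem_smul_stabHS hx) ?_
    (interiorPoint_add_sub_cycStep_mem hn hαk hr hrd c)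
  rw [← sum_charVec_cycImage_blockPos_const hn hαk hr hrd c zero_le_one]
  exact sum_charVec_mem_smul_stabHS d.succ_pos fun t _ =>
    (isStable_cycImage_blockPos hn hαk hr hrd _ 0 fun _ _ => t.le_succ).1

theorem interiorPoint_apply (c : ℕ) (i : Fin n) :
    interiorPoint n d α c i = 1 + #{m ∈ range α | ((c + m * d : ℕ) : Fin n) = i} := by
  simp [interiorPoint, Finset.sum_apply, Pi.single_apply, sum_boole, @eq_comm (Fin n) i]

theorem exists_interiorPoint_apply_eq_intCast (c : ℕ) (i : Fin n) :
    ∃ z : ℤ, interiorPoint n d α c i = z :=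
  ⟨1 + #{m ∈ range α | ((c + m * d : ℕ) : Fin n) = i}, by simp [interiorPoint_apply]⟩

theorem interiorPoint_zero_ne_one (hn : n + α = k * (d + 1)) (hαk : α < k)
    (hα : 0 < α) (hd : 0 < d) : interiorPoint n d α 0 ≠ interiorPoint n d α 1 := by
  intro h
  have h0 := congrFun h 0
  simp only [interiorPoint_apply, add_right_inj, Nat.cast_inj] at h0
  have hmem : 0 ∈ {m ∈ range α | ((0 + m * d : ℕ) : Fin n) = 0} := by simp [hα]
  have hempty : {m ∈ range α | ((1 + m * d : ℕ) : Fin n) = 0} = ∅ := by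
    refine filter_eq_empty_iff.mpr fun m hm hcast => ?_
    have hlt : 1 + m * d < n := by
      rw [mem_range] at hm
      nlinarith [Nat.mul_le_mul_right (d + 1) (show α + 1 ≤ k by omega)]
    have := congrArg Fin.val hcast
    rw [Fin.val_natCast, Nat.mod_eq_of_lt hlt, Fin.val_zero] at this
    omega
  rw [hempty, card_empty, card_eq_zero] at h0
  rw [h0] at hmem
  exact notMem_empty 0 hmem

end Construction

theorem stmt11_general (n k q α : ℕ) (hqα : k * q = n + α) (hα2 : 2 ≤ α) (hαk : α ≤ k - 1)
    (r : ℕ) (hr1 : 1 ≤ r) (hr2 : r < n / k) :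
    ∃ y z : Fin n → ℝ, y ≠ z ∧
      y ∈ intrinsicInterior ℝ ((q : ℝ) • stabHS n k r) ∧
      z ∈ intrinsicInterior ℝ ((q : ℝ) • stabHS n k r) ∧
      (∀ i, ∃ m : ℤ, y i = (m : ℝ)) ∧ (∀ i, ∃ m : ℤ, z i = (m : ℝ)) := by
  have hαk' : α < k := by omega
  obtain ⟨d, rfl⟩ : ∃ d, q = d + 1 := Nat.exists_eq_add_one.mpr (Nat.pos_of_ne_zero (by
    rintro rfl
    omega))
  have hn : n + α = k * (d + 1) := hqα.symm
  have hdiv : n / k = d := Nat.div_eq_of_lt_le (by nlinarith) (by nlinarith)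
  have : NeZero n := ⟨by rintro rfl; simp at hr2⟩
  refine ⟨interiorPoint n d α 0, interiorPoint n d α 1,
    interiorPoint_zero_ne_one hn hαk' (by omega) (by omega), ?_, ?_,
    exists_interiorPoint_apply_eq_intCast 0, exists_interiorPoint_apply_eq_intCast 1⟩ <;>
  exact_mod_cast interiorPoint_mem_intrinsicInterior hn hαk' hr1 (by omega) _

/-- let `q = ⌈n/k⌉` and suppose `α = kq - n` satisfies `2 ≤ α ≤ k-1`.
Then for every `1 ≤ r < ⌊n/k⌋`, the relative interior of `q · Δ_{n,k}^{stab(r)}` contains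
at least two distinct lattice points. -/
theorem stmt11 (n k q α : ℕ) (hk : 1 < k) (hkn : k < n - 1)
    (hq : q = (n + k - 1) / k) (hqα : k * q = n + α) (hα2 : 2 ≤ α) (hαk : α ≤ k - 1)
    (r : ℕ) (hr1 : 1 ≤ r) (hr2 : r < n / k) :
    ∃ y z : Fin n → ℝ, y ≠ z ∧
      y ∈ intrinsicInterior ℝ ((q : ℝ) • stabHS n k r) ∧
      z ∈ intrinsicInterior ℝ ((q : ℝ) • stabHS n k r) ∧
      (∀ i, ∃ m : ℤ, y i = (m : ℝ)) ∧ (∀ i, ∃ m : ℤ, z i = (m : ℝ)) :=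
  stmt11_general n k q α hqα hα2 hαk r hr1 hr2
end
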